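/- arXiv:1503.00312 — 9 statements merged into one kernel-verified Lean document; each statement's English description precedes it below -/
import Mathlib

section
/- Let α, β, a, b be real numbers and let A be the 3×3 real matrix A = [[0,0,0],[0,αb,βb],[0,-αa,-βa]] (whose trace is αb-βa). If αb - βa ≠ 0, then the matrix exponential of A satisfies exp(A) = 1 + ((e^{αb-βa} - 1)/(αb-βa)) • A, where 1 is the 3×3 identity matrix. -/
/-!
The matrix `A` satisfies `A * A = t • A` with `t = αb - βa`, so `A ^ (n + 1) = t ^ n • A`.
Multiplying the exponential series of `A` by `t` therefore turns every term but the constant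
one into the corresponding term of `(exp t) • A`, whence `t • (exp A - 1) = (exp t - 1) • A`.
-/

open NormedSpace

theorem pow_succ_eq_smul_of_mul_self_eq_smul {R A : Type*} [CommSemiring R] [Semiring A]
    [Algebra R A] {a : A} {t : R} (h : a * a = t • a) (n : ℕ) : a ^ (n + 1) = t ^ n • a := by
  induction n with
  | zero => simp
  | succ n ih => rw [pow_succ, ih, smul_mul_assoc, h, smul_smul, pow_succ]

section MulSelfEqSmul

variable {𝕂 𝔸 : Type*} [RCLike 𝕂] [NormedRing 𝔸] [NormedAlgebra 𝕂 𝔸] [CompleteSpace 𝔸]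
  {a : 𝔸} {t : 𝕂}

theorem smul_exp_sub_one_of_mul_self_eq_smul (h : a * a = t • a) :
    t • (exp a - 1) = (exp t - 1) • a := by
  have hsum : HasSum (fun n : ℕ => t • ((n.factorial⁻¹ : 𝕂) • a ^ n) -
      ((n.factorial⁻¹ : 𝕂) • t ^ n) • a) (t • exp a - exp t • a) :=
    ((exp_series_hasSum_exp' a).const_smul t).sub ((exp_series_hasSum_exp' t).smul_const a)
  have hterms : (fun n : ℕ => t • ((n.factorial⁻¹ : 𝕂) • a ^ n) -
      ((n.factorial⁻¹ : 𝕂) • t ^ n) • a) = fun n => if n = 0 then t • 1 - a else 0 := by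
    funext n
    rcases n with _ | n
    · simp
    · rw [if_neg n.add_one_ne_zero, sub_eq_zero, pow_succ_eq_smul_of_mul_self_eq_smul h,
        smul_smul, smul_smul]
      ring_nf
  rw [hterms] at hsum
  have hconst : t • exp a - exp t • a = t • 1 - a := hsum.unique (hasSum_ite_eq 0 _)
  rw [smul_sub, sub_smul, one_smul]
  exact sub_eq_sub_iff_sub_eq_sub.mpr hconst

theorem exp_eq_one_add_smul_of_mul_self_eq_smul (h : a * a = t • a) (ht : t ≠ 0) :
    exp a = 1 + ((exp t - 1) / t) • a := by
  rw [div_eq_inv_mul, mul_smul, ← smul_exp_sub_one_of_mul_self_eq_smul h, inv_smul_smul₀ ht,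
    add_sub_cancel]

end MulSelfEqSmul

theorem F1_matrix_mul_self (α β a b : ℝ) :
    (!![0, 0, 0; 0, α * b, β * b; 0, -(α * a), -(β * a)] : Matrix (Fin 3) (Fin 3) ℝ) *
      !![0, 0, 0; 0, α * b, β * b; 0, -(α * a), -(β * a)] =
    (α * b - β * a) • !![0, 0, 0; 0, α * b, β * b; 0, -(α * a), -(β * a)] := by
  ext i j
  fin_cases i <;> fin_cases j <;> simp [Matrix.mul_apply, Fin.sum_univ_three] <;> ring

theorem F1_exp_of_trace_ne_zero (α β a b : ℝ)
    (A : Matrix (Fin 3) (Fin 3) ℝ)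
    (hA : A = !![0, 0, 0; 0, α * b, β * b; 0, -(α * a), -(β * a)])
    (h : α * b - β * a ≠ 0) :
    NormedSpace.exp A =
      1 + ((Real.exp (α * b - β * a) - 1) / (α * b - β * a)) • A := by
  subst hA
  rw [Real.exp_eq_exp_ℝ]
  open scoped Matrix.Norms.Operator in
  exact exp_eq_one_add_smul_of_mul_self_eq_smul (F1_matrix_mul_self α β a b) h
end

section
/- Let α, a, b, c be real numbers and let A be the 3×3 real matrix A = [[0,-αb,αa],[0,0,-αc],[0,αc,0]]. If αc ≠ 0, then the matrix exponential of A satisfies exp(A) = 1 + (sin(αc)/(αc)) • A + ((1 - cos(αc))/(αc)²) • A². -/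
/-!
Since `A ^ 3 = -θ ^ 2 • A` with `θ = α c`, the exponential series collapses: odd powers are
`(-θ ^ 2) ^ k • A`, even positive powers are `(-θ ^ 2) ^ k • A ^ 2`, and the two scalar series left
over are the Taylor series of `sin θ / θ` and `(1 - cos θ) / θ ^ 2`.
-/

open NormedSpace Nat

theorem pow_two_mul_add_one_of_pow_three {R M : Type*} [Monoid R] [Monoid M] [MulAction R M]
    [SMulCommClass R M M] {x : M} {r : R} (hx : x ^ 3 = r • x) (k : ℕ) :
    x ^ (2 * k + 1) = r ^ k • x := by
  induction k with
  | zero => simp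
  | succ k ih =>
    calc x ^ (2 * (k + 1) + 1) = x ^ 2 * x ^ (2 * k + 1) := by rw [← pow_add]; ring_nf
      _ = r ^ k • x ^ 3 := by rw [ih, mul_smul_comm, ← pow_succ]
      _ = r ^ (k + 1) • x := by rw [hx, smul_smul, pow_succ]

theorem pow_two_mul_add_two_of_pow_three {R M : Type*} [Monoid R] [Monoid M] [MulAction R M]
    [IsScalarTower R M M] [SMulCommClass R M M] {x : M} {r : R} (hx : x ^ 3 = r • x) (k : ℕ) :
    x ^ (2 * k + 2) = r ^ k • x ^ 2 := by
  rw [pow_succ, pow_two_mul_add_one_of_pow_three hx, smul_mul_assoc, sq]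

namespace Real

theorem hasSum_sin_div_self {θ : ℝ} (hθ : θ ≠ 0) :
    HasSum (fun k : ℕ => (-θ ^ 2) ^ k / (2 * k + 1)!) (sin θ / θ) := by
  convert! (hasSum_sin θ).div_const θ using 1
  funext k
  rw [neg_pow, ← pow_mul, pow_succ]
  field_simp

theorem hasSum_one_sub_cos_div_sq {θ : ℝ} (hθ : θ ≠ 0) :
    HasSum (fun k : ℕ => (-θ ^ 2) ^ k / (2 * k + 2)!) ((1 - cos θ) / θ ^ 2) := by
  have htail := ((hasSum_nat_add_iff' 1).mpr (hasSum_cos θ)).neg.div_const (θ ^ 2)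
  convert! htail using 1
  · funext k
    rw [neg_pow, ← pow_mul, mul_add, pow_add]
    field_simp
    ring
  · simp

end Real

theorem NormedSpace.exp_eq_of_pow_three_eq_neg_sq_smul {𝔸 : Type*} [Ring 𝔸] [Algebra ℝ 𝔸]
    [TopologicalSpace 𝔸] [IsTopologicalRing 𝔸] [ContinuousSMul ℝ 𝔸] [T2Space 𝔸]
    {x : 𝔸} {θ : ℝ} (hθ : θ ≠ 0) (hx : x ^ 3 = -θ ^ 2 • x) :
    exp x = 1 + (Real.sin θ / θ) • x + ((1 - Real.cos θ) / θ ^ 2) • x ^ 2 := by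
  have hodd : HasSum (fun k => ((2 * k + 1)! : ℝ)⁻¹ • x ^ (2 * k + 1))
      ((Real.sin θ / θ) • x) := by
    convert (Real.hasSum_sin_div_self hθ).smul_const x using 1
    funext k
    rw [pow_two_mul_add_one_of_pow_three hx, smul_smul, div_eq_inv_mul]
  have heven : HasSum (fun k => ((2 * k + 2)! : ℝ)⁻¹ • x ^ (2 * k + 2))
      (((1 - Real.cos θ) / θ ^ 2) • x ^ 2) := by
    convert (Real.hasSum_one_sub_cos_div_sq hθ).smul_const (x ^ 2) using 1
    funext k
    rw [pow_two_mul_add_two_of_pow_three hx, smul_smul, div_eq_inv_mul]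
  rw [exp_eq_tsum ℝ, add_assoc]
  have hseries := HasSum.zero_add (f := fun n => (n ! : ℝ)⁻¹ • x ^ n) <|
    HasSum.even_add_odd hodd (by simpa only [add_assoc, one_add_one_eq_two] using heven)
  simpa using hseries.tsum_eq

theorem Matrix.pow_three_of_skew_block (p q θ : ℝ) :
    !![0, p, q; 0, 0, -θ; 0, θ, 0] ^ 3 = -θ ^ 2 • !![0, p, q; 0, 0, -θ; 0, θ, 0] := by
  ext i j
  fin_cases i <;> fin_cases j <;>
    simp [pow_succ, Matrix.mul_apply, Fin.sum_univ_succ] <;> ring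

theorem F4_exp_of_ne_zero (α a b c : ℝ)
    (A : Matrix (Fin 3) (Fin 3) ℝ)
    (hA : A = !![0, -(α * b), α * a; 0, 0, -(α * c); 0, α * c, 0])
    (h : α * c ≠ 0) :
    NormedSpace.exp A =
      1 + (Real.sin (α * c) / (α * c)) • A
        + ((1 - Real.cos (α * c)) / (α * c) ^ 2) • A ^ 2 := by
  subst hA
  exact exp_eq_of_pow_three_eq_neg_sq_smul h (Matrix.pow_three_of_skew_block _ _ _)
end

section
/- Let α, a, b, c be real numbers with c ≠ 0, and let A be the 3×3 real matrix A = [[0,-αb,αa],[0,0,-αc],[0,αc,0]]. Then exp(A) equals the matrix [[1, (a/c)(1-cos(αc)) - (b/c)sin(αc), (b/c)(1-cos(αc)) + (a/c)sin(αc)],[0, cos(αc), -sin(αc)],[0, sin(αc), cos(αc)]]. -/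
/-!
The generator `A` is the conjugate, by the shear `[[1, p, q], [0, 1, 0], [0, 0, 1]]` with
`p = -a/c`, `q = -b/c`, of the infinitesimal rotation `diag(0, [[0, -αc], [αc, 0]])`.
That matrix is the image of `(0, iαc)` under the continuous algebra embedding
`ℝ × ℂ → M₃(ℝ)`, `(x, z) ↦ diag(x, multiplication by z on ℂ ≅ ℝ²)`, which commutes with `exp`;
hence its exponential is the image of `(1, e^{iαc})`, the rotation by `αc`.
-/

open NormedSpace

noncomputable def prodComplexBlockHom : ℝ × ℂ →ₐ[ℝ] Matrix (Fin 3) (Fin 3) ℝ where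
  toFun p := !![p.1, 0, 0; 0, p.2.re, -p.2.im; 0, p.2.im, p.2.re]
  map_one' := by ext i j; fin_cases i <;> fin_cases j <;> simp
  map_mul' p q := by
    ext i j
    fin_cases i <;> fin_cases j <;> simp [Matrix.mul_apply, Fin.sum_univ_three] <;> ring
  map_zero' := by ext i j; fin_cases i <;> fin_cases j <;> simp
  map_add' p q := by ext i j; fin_cases i <;> fin_cases j <;> simp [add_comm]
  commutes' r := by
    ext i j; fin_cases i <;> fin_cases j <;> simp [Matrix.algebraMap_matrix_apply]

theorem prodComplexBlockHom_apply (x : ℝ) (z : ℂ) :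
    prodComplexBlockHom (x, z) = !![x, 0, 0; 0, z.re, -z.im; 0, z.im, z.re] := rfl

theorem continuous_prodComplexBlockHom : Continuous prodComplexBlockHom :=
  continuous_matrix fun i j => by
    fin_cases i <;> fin_cases j <;> simp [prodComplexBlockHom] <;> fun_prop

theorem Prod.exp_eq {𝔸 𝔹 : Type*} [NormedRing 𝔸] [NormedAlgebra ℚ 𝔸] [CompleteSpace 𝔸]
    [NormedRing 𝔹] [NormedAlgebra ℚ 𝔹] [CompleteSpace 𝔹] (x : 𝔸 × 𝔹) :
    exp x = (exp x.1, exp x.2) :=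
  Prod.ext (Prod.fst_exp x) (Prod.snd_exp x)

open scoped Matrix.Norms.Operator in
theorem exp_rotationGenerator (θ : ℝ) :
    exp !![0, 0, 0; 0, 0, -θ; 0, θ, (0 : ℝ)] =
      !![1, 0, 0; 0, Real.cos θ, -Real.sin θ; 0, Real.sin θ, Real.cos θ] := by
  have hgen : prodComplexBlockHom (0, θ * Complex.I) = !![0, 0, 0; 0, 0, -θ; 0, θ, (0 : ℝ)] := by
    simp [prodComplexBlockHom_apply]
  calc exp !![0, 0, 0; 0, 0, -θ; 0, θ, (0 : ℝ)]
      = prodComplexBlockHom (exp (0, θ * Complex.I)) := by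
        rw [← hgen]; exact (map_exp _ continuous_prodComplexBlockHom _).symm
    _ = _ := by
        rw [Prod.exp_eq, ← Real.exp_eq_exp_ℝ, ← Complex.exp_eq_exp_ℂ, Real.exp_zero,
          Complex.exp_mul_I, prodComplexBlockHom_apply]
        simp [← Complex.ofReal_cos, ← Complex.ofReal_sin]

def shear (p q : ℝ) : Matrix (Fin 3) (Fin 3) ℝ := !![1, p, q; 0, 1, 0; 0, 0, 1]

theorem shear_mul_shear_neg (p q : ℝ) : shear p q * shear (-p) (-q) = 1 := by
  ext i j; fin_cases i <;> fin_cases j <;> simp [shear, Matrix.mul_apply, Fin.sum_univ_three]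

def shearUnit (p q : ℝ) : (Matrix (Fin 3) (Fin 3) ℝ)ˣ :=
  ⟨shear p q, shear (-p) (-q), shear_mul_shear_neg p q,
    by simpa using shear_mul_shear_neg (-p) (-q)⟩

theorem exp_shear_conj_rotationGenerator (p q θ : ℝ) :
    exp !![0, q * θ, -(p * θ); 0, 0, -θ; 0, θ, (0 : ℝ)] =
      !![1, q * Real.sin θ - p * (1 - Real.cos θ), -(p * Real.sin θ) - q * (1 - Real.cos θ);
         0, Real.cos θ, -Real.sin θ;
         0, Real.sin θ, Real.cos θ] := by
  have hconj : !![0, q * θ, -(p * θ); 0, 0, -θ; 0, θ, (0 : ℝ)] =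
      (shearUnit p q : Matrix (Fin 3) (Fin 3) ℝ) * !![0, 0, 0; 0, 0, -θ; 0, θ, 0] *
        (↑(shearUnit p q)⁻¹ : Matrix (Fin 3) (Fin 3) ℝ) := by
    ext i j
    fin_cases i <;> fin_cases j <;> simp [shearUnit, shear]
  rw [hconj, Matrix.exp_units_conj, exp_rotationGenerator]
  ext i j
  fin_cases i <;> fin_cases j <;>
    simp [shearUnit, shear, Matrix.mul_apply, Fin.sum_univ_three] <;> ring

theorem F4_exp_explicit (α a b c : ℝ) (hc : c ≠ 0)
    (A : Matrix (Fin 3) (Fin 3) ℝ)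
    (hA : A = !![0, -(α * b), α * a; 0, 0, -(α * c); 0, α * c, 0]) :
    NormedSpace.exp A =
      !![1, (a / c) * (1 - Real.cos (α * c)) - (b / c) * Real.sin (α * c),
            (b / c) * (1 - Real.cos (α * c)) + (a / c) * Real.sin (α * c);
         0, Real.cos (α * c), -Real.sin (α * c);
         0, Real.sin (α * c), Real.cos (α * c)] := by
  have hA_conj :
      A = !![0, -(b / c) * (α * c), -(-(a / c) * (α * c)); 0, 0, -(α * c); 0, α * c, 0] := by
    rw [hA]; field_simp
  rw [hA_conj, exp_shear_conj_rotationGenerator]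
  congr 1; ring_nf
end

section
/- Let α, a, b, c be real numbers, set Δ = 2a² - 2b² + c², and let A be the 3×3 real matrix A = [[0,αb,αa],[-2αb,0,-αc],[2αa,-αc,0]] (so tr(A²) = 2α²Δ). If α²Δ > 0 and θ = √(α²Δ), then exp(A) = 1 + (sinh(θ)/θ) • A + ((cosh(θ) - 1)/θ²) • A². -/
/-!
The matrix `A` satisfies `A³ = θ² A`: it is traceless, its determinant vanishes, and
`tr(A²) = 2θ²`, so this is its Cayley–Hamilton identity. Hence the odd powers of `A` are
`θ^(2n) A` and the even ones `θ^(2n) A²`, and the exponential series splits into the series of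
`sinh θ / θ` and of `(cosh θ - 1) / θ²`.
-/

open NormedSpace Nat

section CubeRelation

variable {R : Type*} [Ring R] [Algebra ℝ R] {a : R} {s : ℝ}

theorem pow_two_mul_add_one_of_pow_three_eq_smul (h : a ^ 3 = s • a) (n : ℕ) :
    a ^ (2 * n + 1) = s ^ n • a := by
  induction n with
  | zero => simp
  | succ n ih =>
    calc a ^ (2 * (n + 1) + 1) = a ^ (2 * n + 1) * a ^ 2 := by rw [← pow_add]; ring_nf
      _ = s ^ n • a ^ 3 := by rw [ih, smul_mul_assoc, ← pow_succ' a 2]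
      _ = s ^ (n + 1) • a := by rw [h, smul_smul, ← pow_succ]

theorem pow_two_mul_add_two_of_pow_three_eq_smul (h : a ^ 3 = s • a) (n : ℕ) :
    a ^ (2 * n + 2) = s ^ n • a ^ 2 := by
  rw [pow_succ, pow_two_mul_add_one_of_pow_three_eq_smul h, smul_mul_assoc, ← sq]

variable [TopologicalSpace R] [IsTopologicalRing R] [ContinuousSMul ℝ R] [T2Space R]

theorem exp_eq_of_pow_three_eq_sq_smul {t : ℝ} (ht : t ≠ 0) (h : a ^ 3 = t ^ 2 • a) :
    exp a = 1 + (Real.sinh t / t) • a + ((Real.cosh t - 1) / t ^ 2) • a ^ 2 := by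
  have hodd : HasSum (fun n => ((2 * n + 1)! : ℝ)⁻¹ • a ^ (2 * n + 1))
      ((Real.sinh t / t) • a) := by
    convert ((Real.hasSum_sinh t).div_const t).smul_const a using 2 with n
    rw [pow_two_mul_add_one_of_pow_three_eq_smul h, smul_smul, ← pow_mul]
    congr 1
    field_simp
    ring
  have heven : HasSum (fun n => ((2 * n + 1 + 1)! : ℝ)⁻¹ • a ^ (2 * n + 1 + 1))
      (((Real.cosh t - 1) / t ^ 2) • a ^ 2) := by
    have hcosh := (hasSum_nat_add_iff' 1).mpr (Real.hasSum_cosh t)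
    simp only [Finset.range_one, Finset.sum_singleton, mul_zero, pow_zero, factorial_zero,
      cast_one, div_one, mul_add_one] at hcosh
    convert (hcosh.div_const (t ^ 2)).smul_const (a ^ 2) using 2 with n
    rw [pow_two_mul_add_two_of_pow_three_eq_smul h, smul_smul, ← pow_mul]
    congr 1
    field_simp
    ring
  have hexp : HasSum (fun n => (n ! : ℝ)⁻¹ • a ^ n)
      (1 + (Real.sinh t / t) • a + ((Real.cosh t - 1) / t ^ 2) • a ^ 2) := by
    rw [← hasSum_nat_add_iff' 1, Finset.sum_range_one, factorial_zero, cast_one, inv_one,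
      pow_zero, one_smul, add_assoc, add_sub_cancel_left]
    exact HasSum.even_add_odd (f := fun n => ((n + 1)! : ℝ)⁻¹ • a ^ (n + 1)) hodd heven
  rw [exp_eq_tsum ℝ]
  exact hexp.tsum_eq

end CubeRelation

theorem F8_matrix_pow_three (α a b c : ℝ) :
    !![0, α * b, α * a; -(2 * α * b), 0, -(α * c); 2 * α * a, -(α * c), 0] ^ 3 =
      (α ^ 2 * (2 * a ^ 2 - 2 * b ^ 2 + c ^ 2)) •
        !![0, α * b, α * a; -(2 * α * b), 0, -(α * c); 2 * α * a, -(α * c), 0] := by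
  ext i j
  fin_cases i <;> fin_cases j <;>
    simp [pow_succ, Matrix.mul_apply, Fin.sum_univ_three] <;> ring

theorem F8_exp_of_pos (α a b c Δ θ : ℝ)
    (hΔ : Δ = 2 * a ^ 2 - 2 * b ^ 2 + c ^ 2)
    (A : Matrix (Fin 3) (Fin 3) ℝ)
    (hA : A = !![0, α * b, α * a; -(2 * α * b), 0, -(α * c); 2 * α * a, -(α * c), 0])
    (h : α ^ 2 * Δ > 0)
    (hθ : θ = Real.sqrt (α ^ 2 * Δ)) :
    NormedSpace.exp A =
      1 + (Real.sinh θ / θ) • A + ((Real.cosh θ - 1) / θ ^ 2) • A ^ 2 := by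
  have hθ_ne : θ ≠ 0 := hθ ▸ (Real.sqrt_pos.mpr h).ne'
  have hθ_sq : θ ^ 2 = α ^ 2 * Δ := by rw [hθ, Real.sq_sqrt h.le]
  refine exp_eq_of_pow_three_eq_sq_smul hθ_ne ?_
  rw [hθ_sq, hΔ, hA]
  exact F8_matrix_pow_three α a b c
end

section
/- Let α, a, b, c be real numbers, set Δ = 2a² - 2b² + c², and let A be the 3×3 real matrix A = [[0,αb,αa],[-2αb,0,-αc],[2αa,-αc,0]]. If α²Δ = 0, then A³ = 0 and exp(A) = 1 + A + (1/2) • A². -/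
/-!
The matrix `A` has trace `0`, determinant `0` and sum of principal `2 × 2` minors `-α²Δ`,
so by Cayley–Hamilton `A³ = α²Δ • A`. Hence `A³ = 0` when `α²Δ = 0`, and the exponential
series of `A` stops after its quadratic term.
-/

open Finset Matrix
open scoped Nat

namespace NormedSpace

variable (𝕂 : Type*) {𝔸 : Type*} [Field 𝕂] [CharZero 𝕂] [Ring 𝔸] [Algebra 𝕂 𝔸]
  [TopologicalSpace 𝔸] [IsTopologicalRing 𝔸]

theorem exp_eq_sum_of_pow_eq_zero {x : 𝔸} {k : ℕ} (hx : x ^ k = 0) :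
    exp x = ∑ i ∈ range k, (i !⁻¹ : 𝕂) • x ^ i := by
  rw [exp_eq_tsum 𝕂]
  refine tsum_eq_sum fun i hi => ?_
  rw [pow_eq_zero_of_le (not_lt.mp (mem_range.not.mp hi)) hx, smul_zero]

theorem exp_eq_of_pow_three_eq_zero {x : 𝔸} (hx : x ^ 3 = 0) :
    exp x = 1 + x + (1 / 2 : 𝕂) • x ^ 2 := by
  simp [exp_eq_sum_of_pow_eq_zero 𝕂 hx, sum_range_succ, Nat.factorial]

end NormedSpace

def f8Matrix {R : Type*} [CommRing R] (α a b c : R) :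
    Matrix (Fin 3) (Fin 3) R :=
  !![0, α * b, α * a; -(2 * α * b), 0, -(α * c); 2 * α * a, -(α * c), 0]

theorem f8Matrix_pow_three {R : Type*} [CommRing R] (α a b c : R) :
    f8Matrix α a b c ^ 3 = (α ^ 2 * (2 * a ^ 2 - 2 * b ^ 2 + c ^ 2)) • f8Matrix α a b c := by
  ext i j
  fin_cases i <;> fin_cases j <;>
    simp [f8Matrix, pow_succ, mul_apply, Fin.sum_univ_succ] <;> ring

theorem F8_exp_of_eq_zero (α a b c Δ : ℝ)
    (hΔ : Δ = 2 * a ^ 2 - 2 * b ^ 2 + c ^ 2)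
    (A : Matrix (Fin 3) (Fin 3) ℝ)
    (hA : A = !![0, α * b, α * a; -(2 * α * b), 0, -(α * c); 2 * α * a, -(α * c), 0])
    (h : α ^ 2 * Δ = 0) :
    A ^ 3 = 0 ∧ NormedSpace.exp A = 1 + A + (1 / 2 : ℝ) • A ^ 2 := by
  have hA3 : A ^ 3 = 0 := by
    rw [show A = f8Matrix α a b c from hA, f8Matrix_pow_three, ← hΔ, h, zero_smul]
  exact ⟨hA3, NormedSpace.exp_eq_of_pow_three_eq_zero ℝ hA3⟩
end

section
/- Let α, a, b, c be real numbers and let A be the 3×3 real matrix A = [[0,αa,-αb],[0,-αc,0],[0,0,αc]] (so tr(A²) = 2α²c²). If αc ≠ 0, then exp(A) = 1 + (sinh(αc)/(αc)) • A + ((cosh(αc) - 1)/(αc)²) • A². -/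
/-!
The matrix `A` has eigenvalues `0, -αc, αc`, so by Cayley–Hamilton `A³ = (αc)² A`. Hence every
odd power of `A` is a scalar multiple of `A` and every positive even power one of `A²`, and the
exponential series splits into the series of `sinh (αc)` and `cosh (αc) - 1`.
-/

open NormedSpace
open scoped Nat

section PowThreeEqSqSmul

variable {𝔸 : Type*} [NormedRing 𝔸] [NormedAlgebra ℝ 𝔸] {x : 𝔸} {k : ℝ}

theorem pow_odd_of_pow_three_eq_sq_smul (hx : x ^ 3 = k ^ 2 • x) (n : ℕ) :
    x ^ (2 * n + 1) = k ^ (2 * n) • x := by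
  induction n with
  | zero => simp
  | succ n ih =>
    calc x ^ (2 * (n + 1) + 1) = x ^ (2 * n) * x ^ 3 := by rw [← pow_add]; ring_nf
      _ = k ^ (2 * (n + 1)) • x := by
        rw [hx, mul_smul_comm, ← pow_succ, ih, smul_smul, ← pow_add]; ring_nf

theorem pow_even_of_pow_three_eq_sq_smul (hx : x ^ 3 = k ^ 2 • x) (n : ℕ) :
    x ^ (2 * n + 2) = k ^ (2 * n) • x ^ 2 := by
  rw [pow_succ, pow_odd_of_pow_three_eq_sq_smul hx, smul_mul_assoc, ← sq]

theorem hasSum_expSeries_odd_of_pow_three_eq_sq_smul (hk : k ≠ 0) (hx : x ^ 3 = k ^ 2 • x) :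
    HasSum (fun n => ((2 * n + 1)! : ℝ)⁻¹ • x ^ (2 * n + 1)) ((Real.sinh k / k) • x) := by
  convert ((Real.hasSum_sinh k).div_const k).smul_const x using 2 with n
  rw [pow_odd_of_pow_three_eq_sq_smul hx, smul_smul, pow_succ]
  field_simp

theorem hasSum_expSeries_even_of_pow_three_eq_sq_smul (hk : k ≠ 0) (hx : x ^ 3 = k ^ 2 • x) :
    HasSum (fun n => ((2 * n)! : ℝ)⁻¹ • x ^ (2 * n))
      (1 + ((Real.cosh k - 1) / k ^ 2) • x ^ 2) := by
  have hcosh := (hasSum_nat_add_iff' 1).mpr (Real.hasSum_cosh k)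
  simp only [Finset.sum_range_one, mul_zero, pow_zero, Nat.factorial_zero, Nat.cast_one,
    div_one] at hcosh
  have hshift : HasSum (fun n => ((2 * (n + 1))! : ℝ)⁻¹ • x ^ (2 * (n + 1)))
      (((Real.cosh k - 1) / k ^ 2) • x ^ 2) := by
    convert (hcosh.div_const (k ^ 2)).smul_const (x ^ 2) using 2 with n
    rw [mul_add, mul_one, pow_even_of_pow_three_eq_sq_smul hx, smul_smul, pow_add]
    field_simp
  simpa using hshift.zero_add (f := fun n => ((2 * n)! : ℝ)⁻¹ • x ^ (2 * n))

theorem exp_eq_of_pow_three_eq_sq_smul_s10 [CompleteSpace 𝔸] (hk : k ≠ 0) (hx : x ^ 3 = k ^ 2 • x) :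
    exp x = 1 + (Real.sinh k / k) • x + ((Real.cosh k - 1) / k ^ 2) • x ^ 2 := by
  have hsum := (hasSum_expSeries_even_of_pow_three_eq_sq_smul hk hx).even_add_odd
    (f := fun n => (n ! : ℝ)⁻¹ • x ^ n) (hasSum_expSeries_odd_of_pow_three_eq_sq_smul hk hx)
  rw [(exp_series_hasSum_exp' (𝕂 := ℝ) x).unique hsum]
  abel

end PowThreeEqSqSmul

theorem Matrix.pow_three_of_diag_zero_neg_self {R : Type*} [CommRing R] (p q k : R) :
    !![0, p, q; 0, -k, 0; 0, 0, k] ^ 3 = k ^ 2 • !![0, p, q; 0, -k, 0; 0, 0, k] := by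
  simp only [pow_succ, pow_zero, one_mul, Matrix.mul_fin_three, Matrix.smul_of]
  ext i j
  fin_cases i <;> fin_cases j <;> simp <;> ring

theorem F9_exp_of_ne_zero (α a b c : ℝ)
    (A : Matrix (Fin 3) (Fin 3) ℝ)
    (hA : A = !![0, α * a, -(α * b); 0, -(α * c), 0; 0, 0, α * c])
    (h : α * c ≠ 0) :
    NormedSpace.exp A =
      1 + (Real.sinh (α * c) / (α * c)) • A
        + ((Real.cosh (α * c) - 1) / (α * c) ^ 2) • A ^ 2 := by
  subst hA
  -- `exp` depends only on the topology, so any of the equivalent matrix norms will do.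
  open scoped Matrix.Norms.Operator in
  exact exp_eq_of_pow_three_eq_sq_smul_s10 h (Matrix.pow_three_of_diag_zero_neg_self _ _ _)
end

section
/- Let α, a, b, c be real numbers and let A be the 3×3 real matrix A = [[0,αb,αa],[0,0,-αc],[0,-αc,0]] (so tr(A²) = 2α²c²). If αc ≠ 0, then exp(A) = 1 + (sinh(αc)/(αc)) • A + ((cosh(αc) - 1)/(αc)²) • A². -/
/-! With `k = αc`, the matrix `A` satisfies `A³ = k² A`. Hence
`p = (A/k + A²/k²)/2` and `q = (-A/k + A²/k²)/2` satisfy `A p = k p`, `A q = -k q` and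
`A = k p - k q`, so `A^(n+1) = k^(n+1) p + (-k)^(n+1) q`. Summing the exponential series gives
`exp A = 1 + (eᵏ - 1) p + (e⁻ᵏ - 1) q`, which regroups into the `sinh`/`cosh` formula. -/

open NormedSpace
open scoped Nat

section Algebra

variable {R 𝔸 : Type*} [CommSemiring R] [Semiring 𝔸] [Algebra R 𝔸]

theorem pow_succ_eq_smul_add_smul {x p q : 𝔸} {s t : R} (hx : x = s • p + t • q)
    (hp : x * p = s • p) (hq : x * q = t • q) (n : ℕ) :
    x ^ (n + 1) = s ^ (n + 1) • p + t ^ (n + 1) • q := by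
  induction n with
  | zero => simpa using hx
  | succ n ih =>
    rw [pow_succ', ih, mul_add, mul_smul_comm, mul_smul_comm, hp, hq, smul_smul, smul_smul,
      ← pow_succ, ← pow_succ]

end Algebra

theorem hasSum_pow_succ_div_factorial (s : ℝ) :
    HasSum (fun n : ℕ => ((n + 1)! : ℝ)⁻¹ * s ^ (n + 1)) (Real.exp s - 1) := by
  have h := (hasSum_nat_add_iff' 1).mpr (Real.exp_eq_exp_ℝ ▸ exp_series_hasSum_exp' (𝕂 := ℝ) s)
  simpa using h

section Exp

variable {𝔸 : Type*} [NormedRing 𝔸] [NormedAlgebra ℝ 𝔸] [CompleteSpace 𝔸]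

theorem exp_eq_of_eq_smul_add_smul {x p q : 𝔸} {s t : ℝ} (hx : x = s • p + t • q)
    (hp : x * p = s • p) (hq : x * q = t • q) :
    exp x = 1 + (Real.exp s - 1) • p + (Real.exp t - 1) • q := by
  have hsum : HasSum (fun n : ℕ => ((n + 1)! : ℝ)⁻¹ • x ^ (n + 1))
      ((Real.exp s - 1) • p + (Real.exp t - 1) • q) := by
    convert ((hasSum_pow_succ_div_factorial s).smul_const p).add
      ((hasSum_pow_succ_div_factorial t).smul_const q) using 1
    funext n
    rw [pow_succ_eq_smul_add_smul hx hp hq, smul_add, smul_smul, smul_smul]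
  refine (exp_series_hasSum_exp' (𝕂 := ℝ) x).unique ((hasSum_nat_add_iff' 1).mp ?_)
  simpa [add_assoc] using hsum

theorem exp_eq_of_pow_three_eq {x : 𝔸} {k : ℝ} (hk : k ≠ 0) (hx : x ^ 3 = k ^ 2 • x) :
    exp x = 1 + (Real.sinh k / k) • x + ((Real.cosh k - 1) / k ^ 2) • x ^ 2 := by
  set p : 𝔸 := (2 * k)⁻¹ • x + (2 * k ^ 2)⁻¹ • x ^ 2
  set q : 𝔸 := -(2 * k)⁻¹ • x + (2 * k ^ 2)⁻¹ • x ^ 2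
  have hx3 : x * x ^ 2 = k ^ 2 • x := by rw [← pow_succ', hx]
  have hdecomp : x = k • p + (-k) • q := by
    match_scalars <;> field_simp <;> ring
  have hp : x * p = k • p := by
    simp only [p, mul_add, mul_smul_comm, hx3, ← sq]
    match_scalars <;> field_simp
  have hq : x * q = (-k) • q := by
    simp only [q, mul_add, mul_smul_comm, hx3, ← sq]
    match_scalars <;> field_simp
  rw [exp_eq_of_eq_smul_add_smul hdecomp hp hq, Real.sinh_eq, Real.cosh_eq]
  simp only [p, q]
  module

end Exp

theorem F10_matrix_pow_three {R : Type*} [CommRing R] (β γ k : R) :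
    !![0, β, γ; 0, 0, -k; 0, -k, 0] ^ 3 = k ^ 2 • !![0, β, γ; 0, 0, -k; 0, -k, 0] := by
  ext i j
  fin_cases i <;> fin_cases j <;> simp [pow_three, Matrix.mul_apply, Fin.sum_univ_three] <;> ring

theorem F10_exp_of_ne_zero (α a b c : ℝ)
    (A : Matrix (Fin 3) (Fin 3) ℝ)
    (hA : A = !![0, α * b, α * a; 0, 0, -(α * c); 0, -(α * c), 0])
    (h : α * c ≠ 0) :
    NormedSpace.exp A =
      1 + (Real.sinh (α * c) / (α * c)) • A
        + ((Real.cosh (α * c) - 1) / (α * c) ^ 2) • A ^ 2 := by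
  open scoped Matrix.Norms.Operator in
  exact exp_eq_of_pow_three_eq h (hA ▸ F10_matrix_pow_three _ _ _)
end

section
/- Let α, β, a, b, c be real numbers, set τ = αa + βb, and let A be the 3×3 real matrix A = [[τ,0,0],[-αc,0,0],[-βc,0,0]] (whose trace is τ). If τ ≠ 0, then A² = τ • A and exp(A) = 1 + ((e^{τ} - 1)/τ) • A. -/
/-!
`A` has rank one: it is the outer product of its first column `v` with the first basis vector,
so `A² = v₀ • A = τ • A`. Hence `τ • Aⁿ = τⁿ • A` for `n ≥ 1`, and comparing the series of
`τ • exp A` with that of `exp τ • A` term by term leaves only the constant terms `τ • 1` and `A`.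
-/

open NormedSpace Matrix
open scoped Nat

-- Any algebra norm inducing the product topology lets the Banach-algebra facts about `exp` apply.
attribute [local instance] Matrix.linftyOpNormedRing Matrix.linftyOpNormedAlgebra

theorem smul_pow_eq_pow_smul_of_sq_eq_smul {R A : Type*} [CommSemiring R] [Semiring A]
    [Algebra R A] {a : A} {t : R} (h : a ^ 2 = t • a) :
    ∀ {n : ℕ}, n ≠ 0 → t • a ^ n = t ^ n • a
  | 1, _ => by simp
  | n + 2, _ => by
    rw [pow_succ, ← smul_mul_assoc, smul_pow_eq_pow_smul_of_sq_eq_smul h n.succ_ne_zero,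
      smul_mul_assoc, ← sq, h, smul_smul, ← pow_succ]

theorem smul_exp_sub_one_of_sq_eq_smul {𝕂 𝔸 : Type*} [RCLike 𝕂] [NormedRing 𝔸]
    [NormedAlgebra 𝕂 𝔸] [CompleteSpace 𝔸] {a : 𝔸} {t : 𝕂} (h : a ^ 2 = t • a) :
    t • (exp a - 1) = (exp t - 1) • a := by
  have hsum_a := (exp_series_hasSum_exp' (𝕂 := 𝕂) a).const_smul t
  have hsum_t := (exp_series_hasSum_exp' (𝕂 := 𝕂) t).smul_const a
  have hsum_const : HasSum (fun n : ℕ => t • (n ! : 𝕂)⁻¹ • a ^ n - ((n ! : 𝕂)⁻¹ • t ^ n) • a)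
      (t • 1 - a) := by
    convert hasSum_single 0 fun n hn => ?_ using 1
    · simp
    · rw [smul_comm, smul_pow_eq_pow_smul_of_sq_eq_smul h hn, smul_assoc, sub_self]
  have hsum_eq := (hsum_a.sub hsum_t).unique hsum_const
  linear_combination (norm := module) hsum_eq

theorem exp_eq_one_add_div_smul_of_sq_eq_smul {𝕂 𝔸 : Type*} [RCLike 𝕂] [NormedRing 𝔸]
    [NormedAlgebra 𝕂 𝔸] [CompleteSpace 𝔸] {a : 𝔸} {t : 𝕂} (ht : t ≠ 0) (h : a ^ 2 = t • a) :
    exp a = 1 + ((exp t - 1) / t) • a := by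
  rw [div_eq_inv_mul, mul_smul, ← smul_exp_sub_one_of_sq_eq_smul h, inv_smul_smul₀ ht,
    add_sub_cancel]

theorem vecMulVec_sq {n α : Type*} [Fintype n] [DecidableEq n] [CommSemiring α] (v w : n → α) :
    vecMulVec v w ^ 2 = (w ⬝ᵥ v) • vecMulVec v w := by
  rw [sq, vecMulVec_mul_vecMulVec, vecMulVec_smul]

theorem of_fin_three_firstCol_eq_vecMulVec {R : Type*} [Semiring R] (x y z : R) :
    !![x, 0, 0; y, 0, 0; z, 0, 0] = vecMulVec ![x, y, z] ![1, 0, 0] := by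
  ext i j
  fin_cases i <;> fin_cases j <;> simp [vecMulVec_apply]

theorem F11_exp_of_trace_ne_zero_general (α β c τ : ℝ)
    (A : Matrix (Fin 3) (Fin 3) ℝ)
    (hA : A = !![τ, 0, 0; -(α * c), 0, 0; -(β * c), 0, 0])
    (h : τ ≠ 0) :
    A ^ 2 = τ • A ∧
      NormedSpace.exp A = 1 + ((Real.exp τ - 1) / τ) • A := by
  have hsq : A ^ 2 = τ • A := by
    rw [hA, of_fin_three_firstCol_eq_vecMulVec, vecMulVec_sq]
    simp [dotProduct, Fin.sum_univ_three]
  rw [Real.exp_eq_exp_ℝ]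
  exact ⟨hsq, exp_eq_one_add_div_smul_of_sq_eq_smul h hsq⟩

theorem F11_exp_of_trace_ne_zero (α β a b c τ : ℝ)
    (hτ : τ = α * a + β * b)
    (A : Matrix (Fin 3) (Fin 3) ℝ)
    (hA : A = !![τ, 0, 0; -(α * c), 0, 0; -(β * c), 0, 0])
    (h : τ ≠ 0) :
    A ^ 2 = τ • A ∧
      NormedSpace.exp A = 1 + ((Real.exp τ - 1) / τ) • A :=
  F11_exp_of_trace_ne_zero_general α β c τ A hA h
end

section
/- (Rodrigues rotation formula) Let x, y, z be real numbers with x² + y² + z² = 1, let K be the 3×3 real skew-symmetric matrix K = [[0,-z,y],[z,0,-x],[-y,x,0]], and let α be a real number. Then exp(α • K) = 1 + sin(α) • K + (1 - cos(α)) • K². -/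
/-! If `a ^ 3 = -a`, the odd powers `a ^ (2k+1)` are `±a` and the even powers `a ^ (2k+2)` are
`±a ^ 2`, with the signs of the sine and cosine series. Splitting the exponential series of `t • a`
into odd and even terms therefore gives `sin t • a` and `1 + (1 - cos t) • a ^ 2`. For the
skew-symmetric matrix `K` one has `K ^ 3 = -(x² + y² + z²) • K`. -/

open NormedSpace
open scoped Nat

section PowThreeEqNeg

variable {R : Type*} [Ring R] {a : R}

theorem pow_two_mul_add_one_of_pow_three_eq_neg (h : a ^ 3 = -a) (k : ℕ) :
    a ^ (2 * k + 1) = (-1 : ℤ) ^ k • a := by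
  induction k with
  | zero => simp
  | succ k ih =>
    rw [show 2 * (k + 1) + 1 = 2 * k + 1 + 2 by ring, pow_add, ih, smul_mul_assoc, ← pow_succ', h,
      smul_neg, pow_succ, mul_neg_one, neg_smul]

theorem pow_two_mul_add_two_of_pow_three_eq_neg (h : a ^ 3 = -a) (k : ℕ) :
    a ^ (2 * k + 2) = (-1 : ℤ) ^ k • a ^ 2 := by
  rw [pow_succ, pow_two_mul_add_one_of_pow_three_eq_neg h, smul_mul_assoc, ← sq]

end PowThreeEqNeg

theorem Real.hasSum_one_sub_cos (t : ℝ) :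
    HasSum (fun k : ℕ => (-1) ^ k * t ^ (2 * k + 2) / ↑(2 * k + 2)!) (1 - Real.cos t) := by
  have h := ((hasSum_nat_add_iff' 1).mpr (Real.hasSum_cos t)).neg
  simp only [Finset.sum_range_one, neg_sub, mul_zero, pow_zero, Nat.factorial_zero, Nat.cast_one,
    div_one, one_mul] at h
  refine h.congr_fun fun k => ?_
  rw [mul_add, mul_one, pow_succ]
  ring

theorem exp_smul_of_pow_three_eq_neg {A : Type*} [Ring A] [Algebra ℝ A] [TopologicalSpace A]
    [IsTopologicalRing A] [ContinuousSMul ℝ A] [T2Space A] {a : A} (h : a ^ 3 = -a) (t : ℝ) :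
    exp (t • a) = 1 + Real.sin t • a + (1 - Real.cos t) • a ^ 2 := by
  rw [exp_eq_tsum ℝ]
  refine HasSum.tsum_eq ?_
  rw [add_right_comm]
  refine HasSum.even_add_odd ?_ ?_
  · have heven := HasSum.zero_add (f := fun k => ((2 * k)! : ℝ)⁻¹ • (t • a) ^ (2 * k))
      (((Real.hasSum_one_sub_cos t).smul_const (a ^ 2)).congr_fun fun k => ?_)
    · simpa using heven
    · rw [smul_pow, mul_add, mul_one, pow_two_mul_add_two_of_pow_three_eq_neg h]
      module
  · convert (Real.hasSum_sin t).smul_const a using 2 with k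
    rw [smul_pow, pow_two_mul_add_one_of_pow_three_eq_neg h]
    module

theorem skewMatrix_pow_three {R : Type*} [CommRing R] (x y z : R) :
    !![0, -z, y; z, 0, -x; -y, x, 0] ^ 3 =
      -(x ^ 2 + y ^ 2 + z ^ 2) • !![0, -z, y; z, 0, -x; -y, x, 0] := by
  rw [pow_succ, sq]
  simp only [Matrix.mul_fin_three, Matrix.smul_of]
  ext i j
  fin_cases i <;> fin_cases j <;> simp <;> ring

theorem rodrigues_rotation_formula (x y z : ℝ)
    (hunit : x ^ 2 + y ^ 2 + z ^ 2 = 1)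
    (K : Matrix (Fin 3) (Fin 3) ℝ)
    (hK : K = !![0, -z, y; z, 0, -x; -y, x, 0])
    (α : ℝ) :
    NormedSpace.exp (α • K) =
      1 + Real.sin α • K + (1 - Real.cos α) • K ^ 2 := by
  refine exp_smul_of_pow_three_eq_neg ?_ α
  rw [hK, skewMatrix_pow_three, hunit, neg_one_smul]
end
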